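/- For the shifted function f_t(x,y) = (1/4)(xᵀx)²(yᵀy)² - (1/2)A(x,y,x,y) - (t/2)(xᵀx)(yᵀy) with t > 0, any critical point (x,y) with x ≠ 0 and y ≠ 0 yields an M-eigenvalue λ = (xᵀx)(yᵀy) - t of A, with M-eigenvectors x/‖x‖ and y/‖y‖. -/

import Mathlib

open Finset
open scoped RealInnerProductSpace

/-- The biquadratic form `A(x,y,x,y) = ∑ a_{ijkl} x_i y_j x_k y_l`. -/
noncomputable def AQ {m n : ℕ} (a : Fin m → Fin n → Fin m → Fin n → ℝ)
    (x : EuclideanSpace ℝ (Fin m)) (y : EuclideanSpace ℝ (Fin n)) : ℝ :=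
  ∑ i, ∑ j, ∑ k, ∑ l, a i j k l * x i * y j * x k * y l

/-- The contraction `A·(y,x,y) ∈ ℝ^m`, `(A·(y,x,y))_i = ∑ a_{ijkl} y_j x_k y_l`. -/
noncomputable def Ayxy {m n : ℕ} (a : Fin m → Fin n → Fin m → Fin n → ℝ)
    (x : EuclideanSpace ℝ (Fin m)) (y : EuclideanSpace ℝ (Fin n)) :
    EuclideanSpace ℝ (Fin m) :=
  WithLp.toLp 2 (fun i => ∑ k, ∑ j, ∑ l, a i j k l * y j * x k * y l)

/-- The contraction `A·(x,y,x) ∈ ℝ^n`, `(A·(x,y,x))_l = ∑ a_{ijkl} x_i y_j x_k`. -/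
noncomputable def Axyx {m n : ℕ} (a : Fin m → Fin n → Fin m → Fin n → ℝ)
    (x : EuclideanSpace ℝ (Fin m)) (y : EuclideanSpace ℝ (Fin n)) :
    EuclideanSpace ℝ (Fin n) :=
  WithLp.toLp 2 (fun l => ∑ i, ∑ j, ∑ k, a i j k l * x i * y j * x k)

/-- The objective function `f(x,y) = (1/4)(xᵀx)²(yᵀy)² - (1/2) A(x,y,x,y)`. -/
noncomputable def fobj {m n : ℕ} (a : Fin m → Fin n → Fin m → Fin n → ℝ)
    (x : EuclideanSpace ℝ (Fin m)) (y : EuclideanSpace ℝ (Fin n)) : ℝ :=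
  (1/4) * ‖x‖^4 * ‖y‖^4 - (1/2) * AQ a x y

/-- The shifted objective `f_t(x,y) = f(x,y) - (t/2)(xᵀx)(yᵀy)`. -/
noncomputable def ftobj {m n : ℕ} (a : Fin m → Fin n → Fin m → Fin n → ℝ) (t : ℝ)
    (x : EuclideanSpace ℝ (Fin m)) (y : EuclideanSpace ℝ (Fin n)) : ℝ :=
  (1/4) * ‖x‖^4 * ‖y‖^4 - (1/2) * AQ a x y - (t/2) * (‖x‖^2 * ‖y‖^2)

/-- Hierarchical symmetry: `a_{ijkl} = a_{kjil} = a_{ilkj}`. -/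
def HierSym {m n : ℕ} (a : Fin m → Fin n → Fin m → Fin n → ℝ) : Prop :=
  ∀ i j k l, a i j k l = a k j i l ∧ a i j k l = a i l k j


lemma Ayxy_smul {m n : ℕ} (a : Fin m → Fin n → Fin m → Fin n → ℝ)
    (c d : ℝ) (x : EuclideanSpace ℝ (Fin m)) (y : EuclideanSpace ℝ (Fin n)) :
    Ayxy a (c • x) (d • y) = (c * d^2) • Ayxy a x y := by
  ext i
  simp only [Ayxy, PiLp.toLp_apply, PiLp.smul_apply, smul_eq_mul, Finset.mul_sum]
  apply Finset.sum_congr rfl; intro k _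
  apply Finset.sum_congr rfl; intro j _
  apply Finset.sum_congr rfl; intro l _
  ring

lemma Axyx_smul {m n : ℕ} (a : Fin m → Fin n → Fin m → Fin n → ℝ)
    (c d : ℝ) (x : EuclideanSpace ℝ (Fin m)) (y : EuclideanSpace ℝ (Fin n)) :
    Axyx a (c • x) (d • y) = (c^2 * d) • Axyx a x y := by
  ext i
  simp only [Axyx, PiLp.toLp_apply, PiLp.smul_apply, smul_eq_mul, Finset.mul_sum]
  apply Finset.sum_congr rfl; intro k _
  apply Finset.sum_congr rfl; intro j _
  apply Finset.sum_congr rfl; intro l _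
  ring

/-- For the shifted function `f_t` with `t > 0`, any critical point
`(x,y)` with `x ≠ 0`, `y ≠ 0` yields the M-eigenvalue `λ = (xᵀx)(yᵀy) - t` with
M-eigenvectors `x/‖x‖` and `y/‖y‖`. -/
theorem stmt6 {m n : ℕ} (a : Fin m → Fin n → Fin m → Fin n → ℝ)
    (hsym : HierSym a) (t : ℝ) (ht : 0 < t)
    (x : EuclideanSpace ℝ (Fin m)) (y : EuclideanSpace ℝ (Fin n))
    (hx : x ≠ 0) (hy : y ≠ 0)
    (hcrit1 : Ayxy a x y = (‖x‖ ^ 2 * ‖y‖ ^ 4 - t * ‖y‖ ^ 2) • x)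
    (hcrit2 : Axyx a x y = (‖x‖ ^ 4 * ‖y‖ ^ 2 - t * ‖x‖ ^ 2) • y) :
    ‖(‖x‖⁻¹ • x : EuclideanSpace ℝ (Fin m))‖ = 1 ∧
      ‖(‖y‖⁻¹ • y : EuclideanSpace ℝ (Fin n))‖ = 1 ∧
      Ayxy a (‖x‖⁻¹ • x) (‖y‖⁻¹ • y) = (‖x‖ ^ 2 * ‖y‖ ^ 2 - t) • (‖x‖⁻¹ • x) ∧
      Axyx a (‖x‖⁻¹ • x) (‖y‖⁻¹ • y) = (‖x‖ ^ 2 * ‖y‖ ^ 2 - t) • (‖y‖⁻¹ • y) := by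
  have hnx : ‖x‖ ≠ 0 := norm_ne_zero_iff.mpr hx
  have hny : ‖y‖ ≠ 0 := norm_ne_zero_iff.mpr hy
  refine ⟨?_, ?_, ?_, ?_⟩
  · rw [norm_smul, norm_inv, norm_norm]; field_simp
  · rw [norm_smul, norm_inv, norm_norm]; field_simp
  · rw [Ayxy_smul, hcrit1, smul_smul, smul_smul]
    congr 1
    field_simp
  · rw [Axyx_smul, hcrit2, smul_smul, smul_smul]
    congr 1
    field_simp
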